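/- The function x ↦ ψ'(x) − 1/x − 1/(2x²) is completely monotonic on (0,∞). -/

import Mathlib

open Finset Filter Topology Real

noncomputable def trigamma (x : ℝ) : ℝ :=
  iteratedDeriv 2 (fun y => Real.log (Real.Gamma y)) x

/-!
Euler's product for `Γ` gives `ψ'(x) = ∑ₖ (x + k)⁻²`. Differentiating termwise, `(-1)ⁿ` times the
`n`-th derivative of `ψ'(x) - 1/x - 1/(2x²)` is `(n+1)!` times
`∑ₖ (x + k)^{-m} - ∫ₓ^∞ t^{-m} dt - x^{-m}/2` with `m = n + 2`, the error of the trapezoidal rule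
for the convex function `t^{-m}` on the unit intervals `[x + k, x + k + 1]`, hence nonnegative.
With `u = 1/a`, `v = 1/(a+1)`, so that `u - v = u v`, the trapezoid inequality on `[a, a + 1]`
becomes `2 (u^{m-1} - v^{m-1}) ≤ (m - 1) (uᵐ + vᵐ)`: expand the left side as
`2 ∑ uⁱ v^{m-i}` and pair `uⁱ vʲ + uʲ vⁱ ≤ u^{i+j} + v^{i+j}`.
-/

theorem pow_sub_pow_eq_sum_of_sub_eq_mul {R : Type*} [CommRing R] {u v : R} (h : u - v = u * v)
    (n : ℕ) : u ^ n - v ^ n = ∑ i ∈ range n, u ^ (i + 1) * v ^ (n - i) := by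
  rw [← geom_sum₂_mul, h, sum_mul]
  refine sum_congr rfl fun i hi => ?_
  rw [show n - i = n - 1 - i + 1 by have := mem_range.1 hi; omega]
  ring

section OrderedRing

variable {R : Type*} [CommRing R] [LinearOrder R] [IsStrictOrderedRing R] {u v : R}

theorem pow_mul_pow_add_pow_mul_pow_le (hu : 0 ≤ u) (hv : 0 ≤ v) (i j : ℕ) :
    u ^ i * v ^ j + u ^ j * v ^ i ≤ u ^ (i + j) + v ^ (i + j) := by
  have key : 0 ≤ (u ^ i - v ^ i) * (u ^ j - v ^ j) := by
    rcases le_total u v with h | h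
    · exact mul_nonneg_of_nonpos_of_nonpos (sub_nonpos.2 (pow_le_pow_left₀ hu h i))
        (sub_nonpos.2 (pow_le_pow_left₀ hu h j))
    · exact mul_nonneg (sub_nonneg.2 (pow_le_pow_left₀ hv h i))
        (sub_nonneg.2 (pow_le_pow_left₀ hv h j))
  linarith [key, show (u ^ i - v ^ i) * (u ^ j - v ^ j)
    = u ^ (i + j) + v ^ (i + j) - (u ^ i * v ^ j + u ^ j * v ^ i) by ring]

theorem two_mul_sum_pow_mul_pow_le (hu : 0 ≤ u) (hv : 0 ≤ v) (n : ℕ) :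
    2 * ∑ i ∈ range n, u ^ (i + 1) * v ^ (n - i) ≤ n * (u ^ (n + 1) + v ^ (n + 1)) := by
  have reflect : ∑ i ∈ range n, u ^ (i + 1) * v ^ (n - i)
      = ∑ i ∈ range n, u ^ (n - i) * v ^ (i + 1) := by
    rw [← sum_range_reflect]
    refine sum_congr rfl fun i hi => ?_
    have := mem_range.1 hi
    rw [show n - 1 - i + 1 = n - i by omega, show n - (n - 1 - i) = i + 1 by omega]
  calc 2 * ∑ i ∈ range n, u ^ (i + 1) * v ^ (n - i)
      = ∑ i ∈ range n, (u ^ (i + 1) * v ^ (n - i) + u ^ (n - i) * v ^ (i + 1)) := by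
        rw [sum_add_distrib, ← reflect, two_mul]
    _ ≤ ∑ i ∈ range n, (u ^ (n + 1) + v ^ (n + 1)) := by
        refine sum_le_sum fun i hi => ?_
        have := mem_range.1 hi
        simpa [show i + 1 + (n - i) = n + 1 by omega] using
          pow_mul_pow_add_pow_mul_pow_le hu hv (i + 1) (n - i)
    _ = n * (u ^ (n + 1) + v ^ (n + 1)) := by rw [sum_const, card_range, nsmul_eq_mul]

theorem two_mul_pow_sub_pow_le_of_sub_eq_mul (hu : 0 ≤ u) (hv : 0 ≤ v) (h : u - v = u * v)
    (n : ℕ) : 2 * (u ^ n - v ^ n) ≤ n * (u ^ (n + 1) + v ^ (n + 1)) :=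
  pow_sub_pow_eq_sum_of_sub_eq_mul h n ▸ two_mul_sum_pow_mul_pow_le hu hv n

end OrderedRing

theorem hasDerivAt_inv_pow {𝕜 : Type*} [NontriviallyNormedField 𝕜] {x : 𝕜} (hx : x ≠ 0)
    (m : ℕ) : HasDerivAt (fun y => y⁻¹ ^ m) (-m * x⁻¹ ^ (m + 1)) x := by
  have := hasDerivAt_zpow (-(m : ℤ)) x (Or.inl hx)
  simp only [zpow_neg, zpow_natCast, ← inv_pow] at this
  convert this using 1
  rw [show -(m : ℤ) - 1 = -((m + 1 : ℕ) : ℤ) by push_cast; ring, zpow_neg, zpow_natCast, inv_pow]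
  push_cast
  ring

theorem iteratedDeriv_eqOn_of_hasDerivAt {𝕜 F : Type*} [NontriviallyNormedField 𝕜]
    [NormedAddCommGroup F] [NormedSpace 𝕜 F] {f : 𝕜 → F} {g : ℕ → 𝕜 → F} {s : Set 𝕜}
    (hs : IsOpen s) (h₀ : Set.EqOn f (g 0) s)
    (hg : ∀ n, ∀ x ∈ s, HasDerivAt (g n) (g (n + 1) x) x) (n : ℕ) :
    Set.EqOn (iteratedDeriv n f) (g n) s := by
  induction n with
  | zero => simpa using h₀
  | succ n ih =>
    intro x hx
    rw [iteratedDeriv_succ, (ih.eventuallyEq_of_mem (hs.mem_nhds hx)).deriv_eq,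
      (hg n x hx).deriv]

noncomputable def hurwitzSeries (m : ℕ) (x : ℝ) : ℝ := ∑' k : ℕ, (x + k)⁻¹ ^ m

theorem summable_inv_add_pow {m : ℕ} (hm : 2 ≤ m) {x : ℝ} (hx : 0 < x) :
    Summable fun k : ℕ => (x + k)⁻¹ ^ m := by
  have := (summable_one_div_nat_add_rpow x m).2 (by exact_mod_cast hm)
  refine this.congr fun k => ?_
  rw [abs_of_pos (by positivity), rpow_natCast, one_div, inv_pow, add_comm]

theorem hurwitzSeries_eq_inv_pow_add {m : ℕ} (hm : 2 ≤ m) {x : ℝ} (hx : 0 < x) :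
    hurwitzSeries m x = x⁻¹ ^ m + hurwitzSeries m (x + 1) := by
  rw [hurwitzSeries, (summable_inv_add_pow hm hx).tsum_eq_zero_add, hurwitzSeries]
  simp only [Nat.cast_zero, add_zero, Nat.cast_succ, add_assoc, add_comm (1 : ℝ)]

theorem hasDerivAt_hurwitzSeries {m : ℕ} (hm : 2 ≤ m) {x : ℝ} (hx : 0 < x) :
    HasDerivAt (hurwitzSeries m) (-m * hurwitzSeries (m + 1) x) x := by
  have hx2 : 0 < x / 2 := half_pos hx
  have hmem : x ∈ Set.Ioi (x / 2) := half_lt_self hx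
  have H := hasDerivAt_tsum_of_isPreconnected (g := fun (k : ℕ) (y : ℝ) => (y + k)⁻¹ ^ m)
    (g' := fun (k : ℕ) (y : ℝ) => -m * (y + k)⁻¹ ^ (m + 1))
    ((summable_inv_add_pow (by omega : 2 ≤ m + 1) hx2).mul_left (m : ℝ)) isOpen_Ioi
    isPreconnected_Ioi (fun k y hy => ?_) (fun k y hy => ?_) hmem (summable_inv_add_pow hm hx) hmem
  · rwa [tsum_mul_left] at H
  · have hy : 0 < y + k := by have : 0 < y := hx2.trans hy; positivity
    exact (hasDerivAt_inv_pow hy.ne' m).comp_add_const y k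
  · have : 0 < y := hx2.trans hy
    rw [norm_mul, norm_neg, norm_natCast, norm_pow, norm_of_nonneg (by positivity)]
    gcongr
    exact hy.le

/-- `∫ₓ^∞ t^{-(n+2)} dt + x^{-(n+2)}/2`, the trapezoidal approximation of
`hurwitzSeries (n + 2) x`. -/
noncomputable def hurwitzApprox (n : ℕ) (x : ℝ) : ℝ :=
  x⁻¹ ^ (n + 1) / ((n : ℝ) + 1) + x⁻¹ ^ (n + 2) / 2

theorem hasDerivAt_hurwitzApprox (n : ℕ) {x : ℝ} (hx : x ≠ 0) :
    HasDerivAt (hurwitzApprox n) (-(n + 2) * hurwitzApprox (n + 1) x) x := by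
  refine (((hasDerivAt_inv_pow hx (n + 1)).div_const ((n : ℝ) + 1)).fun_add
    ((hasDerivAt_inv_pow hx (n + 2)).div_const 2)).congr_deriv ?_
  simp only [hurwitzApprox]
  field_simp
  push_cast
  ring

theorem hurwitzApprox_sub_le (n : ℕ) {a : ℝ} (ha : 0 < a) :
    hurwitzApprox n a - hurwitzApprox n (a + 1) ≤ a⁻¹ ^ (n + 2) := by
  have hab : a⁻¹ - (a + 1)⁻¹ = a⁻¹ * (a + 1)⁻¹ := by field_simp; ring
  have key := two_mul_pow_sub_pow_le_of_sub_eq_mul (by positivity) (by positivity) hab (n + 1)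
  push_cast at key
  have trapezoid : (a⁻¹ ^ (n + 1) - (a + 1)⁻¹ ^ (n + 1)) / ((n : ℝ) + 1)
      ≤ (a⁻¹ ^ (n + 2) + (a + 1)⁻¹ ^ (n + 2)) / 2 := by
    rw [div_le_div_iff₀ (by positivity) two_pos]
    linarith
  rw [sub_div] at trapezoid
  simp only [hurwitzApprox]
  linarith

theorem tendsto_hurwitzApprox_atTop (n : ℕ) :
    Tendsto (hurwitzApprox n) atTop (𝓝 0) := by
  have hp : Continuous fun u : ℝ => u ^ (n + 1) / (n + 1) + u ^ (n + 2) / 2 := by fun_prop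
  convert (hp.tendsto 0).comp tendsto_inv_atTop_zero using 2
  · rfl
  · simp

theorem hurwitzApprox_le_hurwitzSeries (n : ℕ) {x : ℝ} (hx : 0 < x) :
    hurwitzApprox n x ≤ hurwitzSeries (n + 2) x := by
  have partial_le (N : ℕ) :
      hurwitzApprox n x - hurwitzApprox n (x + N) ≤ hurwitzSeries (n + 2) x :=
    calc hurwitzApprox n x - hurwitzApprox n (x + N)
        = ∑ k ∈ range N, (hurwitzApprox n (x + k) - hurwitzApprox n (x + k + 1)) := by
          have := sum_range_sub' (fun k : ℕ => hurwitzApprox n (x + k)) N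
          simp only [Nat.cast_zero, add_zero, Nat.cast_succ, ← add_assoc] at this
          exact this.symm
      _ ≤ ∑ k ∈ range N, (x + k)⁻¹ ^ (n + 2) :=
          sum_le_sum fun k _ => hurwitzApprox_sub_le n (by positivity)
      _ ≤ hurwitzSeries (n + 2) x :=
          (summable_inv_add_pow (by omega) hx).sum_le_tsum _ fun k _ => by positivity
  have hlim : Tendsto (fun N : ℕ => hurwitzApprox n x - hurwitzApprox n (x + N)) atTop
      (𝓝 (hurwitzApprox n x - 0)) :=
    tendsto_const_nhds.sub ((tendsto_hurwitzApprox_atTop n).comp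
      (tendsto_atTop_add_const_left _ x tendsto_natCast_atTop_atTop))
  exact le_of_tendsto' (sub_zero (hurwitzApprox n x) ▸ hlim) partial_le

noncomputable def hurwitzRemainder (n : ℕ) (x : ℝ) : ℝ :=
  hurwitzSeries (n + 2) x - hurwitzApprox n x

theorem hurwitzRemainder_nonneg (n : ℕ) {x : ℝ} (hx : 0 < x) : 0 ≤ hurwitzRemainder n x :=
  sub_nonneg.2 (hurwitzApprox_le_hurwitzSeries n hx)

theorem hasDerivAt_hurwitzRemainder (n : ℕ) {x : ℝ} (hx : 0 < x) :
    HasDerivAt (hurwitzRemainder n) (-(n + 2) * hurwitzRemainder (n + 1) x) x := by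
  refine ((hasDerivAt_hurwitzSeries (by omega : 2 ≤ n + 2) hx).fun_sub
    (hasDerivAt_hurwitzApprox n hx.ne')).congr_deriv ?_
  simp only [hurwitzRemainder]
  push_cast
  ring

noncomputable def logGammaTerm (k : ℕ) (x : ℝ) : ℝ :=
  x / (k + 1) - log (x + (k + 1)) + log (k + 1)

noncomputable def digammaTerm (k : ℕ) (x : ℝ) : ℝ := (k + 1 : ℝ)⁻¹ - (x + (k + 1))⁻¹

theorem logGammaTerm_nonneg (k : ℕ) {x : ℝ} (hx : 0 ≤ x) : 0 ≤ logGammaTerm k x := by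
  have hk : (0 : ℝ) < k + 1 := by positivity
  have := log_le_sub_one_of_pos (show 0 < (x + (k + 1)) / (k + 1) by positivity)
  rw [log_div (by positivity) hk.ne', show (x + (k + 1)) / (k + 1) - 1 = x / (k + 1) by
    field_simp; ring] at this
  simp only [logGammaTerm]
  linarith

theorem sum_range_logGammaTerm (x : ℝ) (n : ℕ) :
    ∑ k ∈ range n, logGammaTerm k x
      = BohrMollerup.logGammaSeq x n + (harmonic n - log n) * x + log x := by
  have log_factorial : log (n.factorial : ℝ) = ∑ k ∈ range n, log (k + 1) := by
    rw [← prod_range_add_one_eq_factorial, Nat.cast_prod,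
      log_prod fun k _ => by positivity]
    push_cast
    rfl
  simp only [logGammaTerm, BohrMollerup.logGammaSeq, sum_range_succ', log_factorial,
    harmonic, sum_add_distrib, sum_sub_distrib]
  push_cast
  simp only [sub_mul, sum_mul, div_eq_inv_mul, add_zero]
  ring

theorem hasSum_logGammaTerm {x : ℝ} (hx : 0 < x) :
    HasSum (fun k => logGammaTerm k x) (log (Gamma x) + eulerMascheroniConstant * x + log x) := by
  rw [hasSum_iff_tendsto_nat_of_nonneg fun k => logGammaTerm_nonneg k hx.le]
  simp_rw [sum_range_logGammaTerm x]
  exact ((BohrMollerup.tendsto_log_gamma hx).add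
    (tendsto_harmonic_sub_log.mul_const x)).add_const (log x)

theorem hasDerivAt_logGammaTerm (k : ℕ) {x : ℝ} (hx : x + (k + 1) ≠ 0) :
    HasDerivAt (logGammaTerm k) (digammaTerm k x) x := by
  refine ((((hasDerivAt_id x).div_const (k + 1)).fun_sub
    (((hasDerivAt_id x).add_const (k + 1 : ℝ)).log hx)).add_const
      (log (k + 1))).congr_deriv ?_
  simp [digammaTerm, one_div]

theorem digammaTerm_nonneg (k : ℕ) {x : ℝ} (hx : 0 ≤ x) : 0 ≤ digammaTerm k x :=
  sub_nonneg.2 (inv_anti₀ (by positivity) (by linarith))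

theorem digammaTerm_le (k : ℕ) {x : ℝ} (hx : 0 ≤ x) :
    digammaTerm k x ≤ x * (1 + k : ℝ)⁻¹ ^ 2 := by
  have hk : (0 : ℝ) < k + 1 := by positivity
  have : digammaTerm k x = x / ((k + 1) * (x + k + 1)) := by
    simp only [digammaTerm]
    field_simp
    ring
  rw [this, inv_pow, ← div_eq_mul_inv, add_comm (1 : ℝ), sq]
  gcongr
  linarith

theorem summable_inv_one_add_sq : Summable fun k : ℕ => (1 + k : ℝ)⁻¹ ^ 2 :=
  summable_inv_add_pow le_rfl one_pos

theorem hasDerivAt_tsum_logGammaTerm {x : ℝ} (hx : 0 < x) :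
    HasDerivAt (fun y => ∑' k, logGammaTerm k y) (∑' k, digammaTerm k x) x := by
  have hmem : x ∈ Set.Ioo 0 (x + 1) := ⟨hx, lt_add_one x⟩
  refine hasDerivAt_tsum_of_isPreconnected (summable_inv_one_add_sq.mul_left (x + 1)) isOpen_Ioo
    isPreconnected_Ioo (fun k y hy => hasDerivAt_logGammaTerm k ?_) (fun k y hy => ?_) hmem
    (hasSum_logGammaTerm hx).summable hmem
  · have := hy.1
    positivity
  · rw [norm_of_nonneg (digammaTerm_nonneg k hy.1.le)]
    exact (digammaTerm_le k hy.1.le).trans (by gcongr; exact hy.2.le)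

theorem hasDerivAt_tsum_digammaTerm {x : ℝ} (hx : 0 < x) :
    HasDerivAt (fun y => ∑' k, digammaTerm k y) (hurwitzSeries 2 (x + 1)) x := by
  have hsum : Summable fun k => digammaTerm k x :=
    (summable_inv_one_add_sq.mul_left x).of_nonneg_of_le (fun k => digammaTerm_nonneg k hx.le)
      fun k => digammaTerm_le k hx.le
  refine hasDerivAt_tsum_of_isPreconnected (g' := fun (k : ℕ) (y : ℝ) => (y + 1 + k)⁻¹ ^ 2)
    summable_inv_one_add_sq isOpen_Ioi isPreconnected_Ioi (fun k y hy => ?_) (fun k y hy => ?_)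
    hx hsum hx
  · have hy : 0 < y + (k + 1) := by have : 0 < y := hy; positivity
    exact (((hasDerivAt_inv hy.ne').comp_add_const y (k + 1 : ℝ)).const_sub
      (k + 1 : ℝ)⁻¹).congr_deriv (by rw [inv_pow]; ring)
  · have : 0 < y := hy
    rw [norm_pow, norm_inv, norm_of_nonneg (by positivity)]
    gcongr
    linarith

theorem hasDerivAt_log_Gamma {x : ℝ} (hx : 0 < x) :
    HasDerivAt (fun y => log (Gamma y))
      (∑' k, digammaTerm k x - eulerMascheroniConstant - x⁻¹) x := by
  have hseries : Set.EqOn (fun y => log (Gamma y))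
      (fun y => ∑' k, logGammaTerm k y - eulerMascheroniConstant * y - log y) (Set.Ioi 0) :=
    fun y hy => by dsimp only; rw [(hasSum_logGammaTerm hy).tsum_eq]; ring
  refine ((((hasDerivAt_tsum_logGammaTerm hx).fun_sub
    ((hasDerivAt_id x).const_mul eulerMascheroniConstant)).fun_sub
      (hasDerivAt_log hx.ne')).congr_deriv (by simp)).congr_of_eventuallyEq
    (hseries.eventuallyEq_of_mem (Ioi_mem_nhds hx))

theorem trigamma_eq_hurwitzSeries {x : ℝ} (hx : 0 < x) : trigamma x = hurwitzSeries 2 x := by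
  have hderiv : Set.EqOn (deriv fun y => log (Gamma y))
      (fun y => ∑' k, digammaTerm k y - eulerMascheroniConstant - y⁻¹) (Set.Ioi 0) :=
    fun y hy => (hasDerivAt_log_Gamma hy).deriv
  have H := ((hasDerivAt_tsum_digammaTerm hx).sub_const eulerMascheroniConstant).fun_sub
    (hasDerivAt_inv hx.ne')
  rw [trigamma, iteratedDeriv_succ, iteratedDeriv_one,
    (hderiv.eventuallyEq_of_mem (Ioi_mem_nhds hx)).deriv_eq, H.deriv,
    hurwitzSeries_eq_inv_pow_add le_rfl hx, inv_pow]
  ring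

theorem iteratedDeriv_trigamma_sub_eqOn (n : ℕ) :
    Set.EqOn (iteratedDeriv n fun y => trigamma y - 1 / y - 1 / (2 * y ^ 2))
      (fun x => (-1) ^ n * (n + 1).factorial * hurwitzRemainder n x) (Set.Ioi (0 : ℝ)) := by
  refine iteratedDeriv_eqOn_of_hasDerivAt
    (g := fun n x => (-1) ^ n * (n + 1).factorial * hurwitzRemainder n x) isOpen_Ioi
    (fun x hx => ?_) (fun n x hx => ?_) n
  · simp only [hurwitzRemainder, hurwitzApprox, trigamma_eq_hurwitzSeries hx]
    norm_num
    ring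
  · refine ((hasDerivAt_hurwitzRemainder n hx).const_mul _).congr_deriv ?_
    push_cast [Nat.factorial_succ]
    ring

theorem stmt15 : ∀ n : ℕ, ∀ x : ℝ, 0 < x →
    0 ≤ (-1 : ℝ)^n * iteratedDeriv n (fun y => trigamma y - 1/y - 1/(2*y^2)) x := by
  intro n x hx
  rw [iteratedDeriv_trigamma_sub_eqOn n hx, ← mul_assoc, ← mul_assoc, ← pow_add, ← two_mul,
    pow_mul, neg_one_sq, one_pow, one_mul]
  exact mul_nonneg (by positivity) (hurwitzRemainder_nonneg n hx)
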